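/- Let A be a finite-dimensional commutative unital real algebra that is nilfactorable, i.e., every zero-divisor polynomial in A[z] equals ε·g(z) for some zero divisor ε ∈ A and some non-zero-divisor g(z) ∈ A[z]. Then for any zero divisor f(z) ∈ A[z] with such a decomposition f(z) = ε·g(z), the annihilator of f(z) in A[z] equals Ann(ε)·A[z], the set of A[z]-multiples of elements of Ann(ε). -/
import Mathlib


theorem stmt19 {A : Type*} [CommRing A] [Algebra ℝ A] [FiniteDimensional ℝ A]
    (hnf : ∀ f : Polynomial A, (∃ g : Polynomial A, g ≠ 0 ∧ f * g = 0) →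
      ∃ (ε : A) (g : Polynomial A), (∃ w : A, w ≠ 0 ∧ ε * w = 0) ∧
        (¬ ∃ h : Polynomial A, h ≠ 0 ∧ g * h = 0) ∧ f = Polynomial.C ε * g)
    (f : Polynomial A) (ε : A) (g : Polynomial A)
    (hε : ∃ w : A, w ≠ 0 ∧ ε * w = 0)
    (hg : ¬ ∃ h : Polynomial A, h ≠ 0 ∧ g * h = 0)
    (hf : f = Polynomial.C ε * g) :
    {h : Polynomial A | f * h = 0}
      = {h : Polynomial A |
          ∃ (x : A) (p : Polynomial A), x * ε = 0 ∧ h = Polynomial.C x * p} := by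
  ext h
  simp only [Set.mem_setOf_eq]
  constructor
  · intro hm
    rcases eq_or_ne ε 0 with rfl | hε0
    · exact ⟨1, h, by simp, by simp⟩
    rcases eq_or_ne h 0 with rfl | hh0
    · exact ⟨0, 0, by simp, by simp⟩
    have hCε : (Polynomial.C ε : Polynomial A) ≠ 0 := by
      simpa using hε0
    -- from f*h = 0 deduce C ε * h = 0 using g non-zero-divisor
    have key : Polynomial.C ε * h = 0 := by
      by_contra hne
      exact hg ⟨Polynomial.C ε * h, hne, by rw [hf] at hm; linear_combination hm⟩
    obtain ⟨x, p, _, hpnzd, hhp⟩ := hnf h ⟨Polynomial.C ε, hCε, by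
      rw [mul_comm]; exact key⟩
    refine ⟨x, p, ?_, hhp⟩
    have : p * Polynomial.C (x * ε) = 0 := by
      rw [hhp] at key
      rw [Polynomial.C_mul]; linear_combination key
    have hc : Polynomial.C (x * ε) = (0 : Polynomial A) := by
      by_contra hne
      exact hpnzd ⟨_, hne, this⟩
    exact (Polynomial.C_eq_zero).mp hc
  · rintro ⟨x, p, hx, rfl⟩
    rw [hf]
    have : ε * x = 0 := by rw [mul_comm]; exact hx
    have : Polynomial.C ε * g * (Polynomial.C x * p)
        = Polynomial.C (ε * x) * (g * p) := by rw [Polynomial.C_mul]; ring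
    rw [this, ‹ε * x = 0›]; simp
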